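/- Let T₁, T₂ be phylogenetic trees with n leaves labeled 1,…,n. Then TD′(T₁, T₂) := d_trans(π(T₁), π(T₂)) is an even integer and TD′(T₁, T₂) ≤ 2n − 4. -/

import Mathlib

open Equiv Finset
open scoped Classical

/-- A phylogenetic tree with `n` leaves labeled `1,…,n`: a rooted tree (every node is
reached from the root by iterating the parent map) with no outdegree-1 nodes, whose
leaves are injectively labeled by `1,…,n`. -/
structure PhyloTree (n : ℕ) where
  /-- number of nodes -/
  numNodes : ℕ
  numNodes_pos : 0 < numNodes
  /-- the parent map (the root is its own parent); the arcs of the tree are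
  (parent v, v) for v ≠ root -/
  parent : Fin numNodes → Fin numNodes
  root : Fin numNodes
  parent_root : parent root = root
  /-- every node is reachable from the root: iterating `parent` reaches the root -/
  reach_root : ∀ v, ∃ k, parent^[k] v = root
  /-- no node has outdegree 1 -/
  no_outdegree_one : ∀ v,
    (Finset.univ.filter fun w => parent w = v ∧ w ≠ root).card ≠ 1
  /-- the labeling of the nodes; only its values on leaves matter -/
  labelOf : Fin numNodes → ℕ
  /-- the leaves (nodes without children) are labeled bijectively by `1,…,n` -/
  label_bij : Set.BijOn labelOf
    {v | (Finset.univ.filter fun w => parent w = v ∧ w ≠ root) = ∅} (Set.Icc 1 n)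

namespace PhyloTree

variable {n : ℕ} (T : PhyloTree n)

/-- The children of a node. -/
def children (v : Fin T.numNodes) : Finset (Fin T.numNodes) :=
  Finset.univ.filter fun w => T.parent w = v ∧ w ≠ T.root

/-- A leaf is a node without children. -/
def IsLeaf (v : Fin T.numNodes) : Prop := T.children v = ∅

/-- The internal nodes of `T`. -/
noncomputable def internals : Finset (Fin T.numNodes) :=
  Finset.univ.filter fun v => ¬ T.IsLeaf v

/-- The height of a node: the length of a longest directed path from it to a leaf. -/
noncomputable def height (v : Fin T.numNodes) : ℕ :=
  sSup {k | ∃ f : Fin (k + 1) → Fin T.numNodes, f 0 = v ∧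
    (∀ i : Fin k, f i.succ ∈ T.children (f i.castSucc)) ∧ T.IsLeaf (f (Fin.last k))}

/-- The smallest `ℓ`-label of a child of `v`. -/
noncomputable def minChildLabel (ℓ : Fin T.numNodes → ℕ) (v : Fin T.numNodes) : ℕ :=
  sInf (ℓ '' (T.children v : Set (Fin T.numNodes)))

/-- `ℓ` is the bottom-up ordering of `T`: an injective map `V → {1,…,|V|}` that
(a) extends the leaf labels, (b) is increasing with height, and (c) for internal nodes
of equal height, is increasing with the minimum label of their children. -/
noncomputable def IsBUO (ℓ : Fin T.numNodes → ℕ) : Prop :=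
  Function.Injective ℓ ∧ (∀ v, ℓ v ∈ Set.Icc 1 T.numNodes) ∧
  (∀ v, T.IsLeaf v → ℓ v = T.labelOf v) ∧
  (∀ u v, T.height u < T.height v → ℓ u < ℓ v) ∧
  (∀ u v, 0 < T.height u → T.height u = T.height v →
    T.minChildLabel ℓ u < T.minChildLabel ℓ v → ℓ u < ℓ v)

/-- The matching representation of `T` (relative to its bottom-up ordering `ℓ`):
the family of the sets `ℓ(children(u))` over the internal nodes `u`. -/
noncomputable def matchRep (ℓ : Fin T.numNodes → ℕ) : Finset (Finset ℕ) :=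
  T.internals.image fun u => (T.children u).image ℓ

/-- The cycle `κ(S) = (i₁, i₂, …, i_k)` associated to a set `S = {i₁ < ⋯ < i_k}`
(the identity if `S` is a singleton or empty). -/
def kappa (S : Finset ℕ) : Equiv.Perm ℕ := (S.sort (· ≤ ·)).formPerm

/-- The matching permutation of `T` (relative to its bottom-up ordering `ℓ`): the
product of the cycles associated to the members of the matching representation; it
fixes every number not in `{1,…,|V|−1}` (in particular it lies in `S_{2n−2}`). -/
noncomputable def matchPerm (ℓ : Fin T.numNodes → ℕ) : Equiv.Perm ℕ :=
  ((T.internals.sort (· ≤ ·)).map fun u => kappa ((T.children u).image ℓ)).prod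

end PhyloTree

/-- A label-preserving isomorphism of phylogenetic trees: a bijection of the nodes
preserving the root, the arcs, and the leaf labels. -/
def PhyloIso {n : ℕ} (T₁ T₂ : PhyloTree n) : Prop :=
  ∃ e : Fin T₁.numNodes ≃ Fin T₂.numNodes,
    e T₁.root = T₂.root ∧
    (∀ v, e (T₁.parent v) = T₂.parent (e v)) ∧
    (∀ v, T₁.IsLeaf v → T₂.labelOf (e v) = T₁.labelOf v)

/-- The least number of transpositions whose product equals `σ`. -/
noncomputable def minSwaps {α : Type*} [DecidableEq α] (σ : Equiv.Perm α) : ℕ :=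
  sInf {k | ∃ l : List (Equiv.Perm α), (∀ τ ∈ l, τ.IsSwap) ∧ l.prod = σ ∧ l.length = k}

/-- `dTrans π₁ π₂` is the least number of transpositions needed to express `π₂⁻¹ * π₁`. -/
noncomputable def dTrans {α : Type*} [DecidableEq α] (π₁ π₂ : Equiv.Perm α) : ℕ :=
  minSwaps (π₂⁻¹ * π₁)

/-! ### Auxiliary lemmas -/

/-- `σ` moves only points of `s`. -/
def MovedIn (σ : Equiv.Perm ℕ) (s : Finset ℕ) : Prop := ∀ x, σ x ≠ x → x ∈ s

lemma MovedIn.mul {σ τ : Equiv.Perm ℕ} {s : Finset ℕ} (hσ : MovedIn σ s)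
    (hτ : MovedIn τ s) : MovedIn (σ * τ) s := by
  intro x hx
  by_cases h : τ x = x
  · exact hσ x (by simpa [Equiv.Perm.mul_apply, h] using hx)
  · exact hτ x h

lemma MovedIn.one (s : Finset ℕ) : MovedIn 1 s := fun x hx => absurd rfl hx

lemma MovedIn.prod {s : Finset ℕ} : ∀ {l : List (Equiv.Perm ℕ)},
    (∀ τ ∈ l, MovedIn τ s) → MovedIn l.prod s
  | [], _ => by simpa using MovedIn.one s
  | τ :: t, h => by
    rw [List.prod_cons]
    exact (h τ (by simp)).mul (MovedIn.prod fun g hg => h g (by simp [hg]))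

lemma MovedIn.iff {σ : Equiv.Perm ℕ} {s : Finset ℕ} (h : MovedIn σ s) :
    ∀ x, x ∈ s ↔ σ x ∈ s := by
  intro x
  constructor
  · intro hx
    by_cases hfix : σ x = x
    · rwa [hfix]
    · by_contra hns
      have : σ (σ x) = σ x := by
        by_contra hmv
        exact hns (h _ hmv)
      exact hfix (σ.injective this)
  · intro hx
    by_contra hns
    have : σ x = x := by
      by_contra hmv
      exact hns (h x hmv)
    rw [this] at hx; exact hns hx

/-- Restriction of a permutation to a finset containing all its moved points. -/
noncomputable def restr (s : Finset ℕ) (σ : Equiv.Perm ℕ) : Equiv.Perm {x : ℕ // x ∈ s} :=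
  if h : MovedIn σ s then σ.subtypePerm (fun x => (h.iff x).symm) else 1

lemma restr_of_movedIn {s : Finset ℕ} {σ : Equiv.Perm ℕ} (h : MovedIn σ s) :
    restr s σ = σ.subtypePerm (fun x => (h.iff x).symm) := dif_pos h

lemma restr_mul {s : Finset ℕ} {σ τ : Equiv.Perm ℕ} (hσ : MovedIn σ s)
    (hτ : MovedIn τ s) : restr s (σ * τ) = restr s σ * restr s τ := by
  rw [restr_of_movedIn (hσ.mul hτ), restr_of_movedIn hσ, restr_of_movedIn hτ,
    ← Equiv.Perm.subtypePerm_mul]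

lemma restr_prod {s : Finset ℕ} : ∀ {l : List (Equiv.Perm ℕ)},
    (∀ τ ∈ l, MovedIn τ s) → restr s l.prod = (l.map (restr s)).prod
  | [], _ => by
    simp [restr_of_movedIn (MovedIn.one s), Equiv.Perm.subtypePerm_one]
    exact Equiv.Perm.subtypePerm_one _ _
  | τ :: t, h => by
    rw [List.prod_cons, restr_mul (h τ (by simp)) (MovedIn.prod fun g hg => h g (by simp [hg])),
      List.map_cons, List.prod_cons, restr_prod fun g hg => h g (by simp [hg])]

lemma movedIn_swap {a b : ℕ} {s : Finset ℕ} (ha : a ∈ s) (hb : b ∈ s) :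
    MovedIn (Equiv.swap a b) s := by
  intro x hx
  rcases Equiv.swap_apply_ne_self_iff.1 hx with ⟨-, hx | hx⟩ <;> subst hx <;> assumption

lemma isSwap_restr {a b : ℕ} {s : Finset ℕ} (hab : a ≠ b) (ha : a ∈ s) (hb : b ∈ s) :
    (restr s (Equiv.swap a b)).IsSwap := by
  refine ⟨⟨a, ha⟩, ⟨b, hb⟩, by simpa using hab, ?_⟩
  rw [restr_of_movedIn (movedIn_swap ha hb)]
  ext x
  rcases eq_or_ne (x : ℕ) a with h | h
  · have hx : x = ⟨a, ha⟩ := Subtype.ext h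
    subst hx
    simp [Equiv.Perm.subtypePerm_apply, Equiv.swap_apply_left]
  rcases eq_or_ne (x : ℕ) b with h' | h'
  · have hx : x = ⟨b, hb⟩ := Subtype.ext h'
    subst hx
    simp [Equiv.Perm.subtypePerm_apply, Equiv.swap_apply_right]
  · have h1 : x ≠ ⟨a, ha⟩ := fun hc => h (by simpa using congrArg Subtype.val hc)
    have h2 : x ≠ ⟨b, hb⟩ := fun hc => h' (by simpa using congrArg Subtype.val hc)
    simp [Equiv.Perm.subtypePerm_apply, Equiv.swap_apply_of_ne_of_ne h h',
      Equiv.swap_apply_of_ne_of_ne h1 h2]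

/-- For every list of swaps, there is a finset containing the moved points of all of them. -/
lemma exists_finset_movedIn : ∀ l : List (Equiv.Perm ℕ), (∀ τ ∈ l, τ.IsSwap) →
    ∃ s : Finset ℕ, ∀ τ ∈ l, MovedIn τ s
  | [], _ => ⟨∅, by simp⟩
  | τ :: t, h => by
    obtain ⟨s, hs⟩ := exists_finset_movedIn t fun g hg => h g (by simp [hg])
    obtain ⟨a, b, hab, rfl⟩ := h τ (by simp)
    refine ⟨insert a (insert b s), ?_⟩
    intro g hg
    rcases List.mem_cons.1 hg with rfl | hg
    · exact movedIn_swap (by simp) (by simp)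
    · exact fun x hx => by simp [hs g hg x hx]

lemma MovedIn.mono {σ : Equiv.Perm ℕ} {s t : Finset ℕ} (h : MovedIn σ s) (hst : s ⊆ t) :
    MovedIn σ t := fun x hx => hst (h x hx)

lemma sign_restr_swaps {s : Finset ℕ} {l : List (Equiv.Perm ℕ)}
    (hl : ∀ τ ∈ l, τ.IsSwap) (hm : ∀ τ ∈ l, MovedIn τ s) :
    Equiv.Perm.sign (restr s l.prod) = (-1) ^ l.length := by
  rw [restr_prod hm]
  have := Equiv.Perm.sign_prod_list_swap (l := l.map (restr s)) ?_
  · simpa using this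
  · intro g hg
    obtain ⟨τ, hτ, rfl⟩ := List.mem_map.1 hg
    obtain ⟨a, b, hab, rfl⟩ := hl τ hτ
    have := hm _ hτ
    exact isSwap_restr hab
      (this a (by simp only [Equiv.swap_apply_left]; exact hab.symm))
      (this b (by simp only [Equiv.swap_apply_right]; exact hab))

lemma swap_lists_length_parity {l l' : List (Equiv.Perm ℕ)}
    (hl : ∀ τ ∈ l, τ.IsSwap) (hl' : ∀ τ ∈ l', τ.IsSwap)
    (h : l.prod = l'.prod) : (Even l.length ↔ Even l'.length) := by
  obtain ⟨s, hs⟩ := exists_finset_movedIn (l ++ l')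
    (by intro τ hτ; rcases List.mem_append.1 hτ with h' | h'
        exacts [hl τ h', hl' τ h'])
  have hm : ∀ τ ∈ l, MovedIn τ s := fun τ hτ => hs τ (by simp [hτ])
  have hm' : ∀ τ ∈ l', MovedIn τ s := fun τ hτ => hs τ (by simp [hτ])
  have hsign : ((-1 : ℤˣ)) ^ l.length = (-1) ^ l'.length := by
    rw [← sign_restr_swaps hl hm, ← sign_restr_swaps hl' hm', h]
  rcases Nat.even_or_odd l.length with he | ho
  · rw [he.neg_one_pow] at hsign
    constructor
    · intro _
      by_contra hodd
      rw [(Nat.not_even_iff_odd.1 hodd).neg_one_pow] at hsign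
      exact (by decide : ¬((1 : ℤˣ) = -1)) hsign
    · exact fun _ => he
  · rw [ho.neg_one_pow] at hsign
    constructor
    · exact fun hc => absurd hc (Nat.not_even_iff_odd.2 ho)
    · intro he'
      rw [he'.neg_one_pow] at hsign
      exact absurd hsign (by decide)

lemma exists_moved_of_ne_one {σ : Equiv.Perm ℕ} (h : σ ≠ 1) : ∃ a, σ a ≠ a := by
  by_contra hc
  push_neg at hc
  exact h (Equiv.ext fun a => hc a)

/-- Any nontrivial permutation moving only points of `s` is a product of at most
`s.card - 1` transpositions. -/
lemma exists_swap_list_card_le : ∀ (m : ℕ) (s : Finset ℕ) (σ : Equiv.Perm ℕ),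
    s.card ≤ m → MovedIn σ s → σ ≠ 1 →
    ∃ l : List (Equiv.Perm ℕ), (∀ τ ∈ l, τ.IsSwap) ∧ l.prod = σ ∧ l.length ≤ s.card - 1 := by
  intro m
  induction m with
  | zero =>
    intro s σ hcard hmov hne
    obtain ⟨a, ha⟩ := exists_moved_of_ne_one hne
    have := hmov a ha
    have : 0 < s.card := Finset.card_pos.2 ⟨a, this⟩
    omega
  | succ m ih =>
    intro s σ hcard hmov hne
    obtain ⟨a, ha⟩ := exists_moved_of_ne_one hne
    have haS : a ∈ s := hmov a ha
    set b := σ a with hb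
    have hba : b ≠ a := ha
    have hσb : σ b ≠ b := fun h => hba (σ.injective (h.trans hb))
    have hbS : b ∈ s := hmov b hσb
    set σ' := Equiv.swap a b * σ with hσ'
    have hσ'a : σ' a = a := by
      simp [hσ', Equiv.Perm.mul_apply, ← hb, Equiv.swap_apply_right]
    have hmov' : MovedIn σ' (s.erase a) := by
      intro x hx
      have hxa : x ≠ a := fun h => hx (by rw [h]; exact hσ'a)
      have hσx : σ x ≠ x := by
        intro h
        apply hx
        simp only [hσ', Equiv.Perm.mul_apply, h]
        rcases eq_or_ne x b with rfl | hxb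
        · exact absurd h hσb
        · exact Equiv.swap_apply_of_ne_of_ne hxa hxb
      exact Finset.mem_erase.2 ⟨hxa, hmov x hσx⟩
    have hcard2 : 2 ≤ s.card :=
      Finset.one_lt_card.2 ⟨a, haS, b, hbS, hba.symm⟩
    have hσσ' : σ = Equiv.swap a b * σ' := by
      rw [hσ', ← mul_assoc, Equiv.swap_mul_self, one_mul]
    rcases eq_or_ne σ' 1 with h1 | h1
    · refine ⟨[Equiv.swap a b], ?_, ?_, ?_⟩
      · intro τ hτ
        rcases List.mem_cons.1 hτ with rfl | hτ
        · exact ⟨a, b, hba.symm, rfl⟩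
        · simp at hτ
      · simp [hσσ', h1]
      · simp only [List.length_singleton]
        omega
    · have hcard' : (s.erase a).card ≤ m := by
        have := Finset.card_erase_of_mem haS
        omega
      obtain ⟨l, hl, hlp, hll⟩ := ih (s.erase a) σ' hcard' hmov' h1
      refine ⟨Equiv.swap a b :: l, ?_, ?_, ?_⟩
      · intro τ hτ
        rcases List.mem_cons.1 hτ with rfl | hτ
        · exact ⟨a, b, hba.symm, rfl⟩
        · exact hl τ hτ
      · rw [List.prod_cons, hlp, ← hσσ']
      · have := Finset.card_erase_of_mem haS
        simp only [List.length_cons]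
        omega


lemma formPerm_swap_list : ∀ l : List ℕ, l.Nodup →
    ∃ L : List (Equiv.Perm ℕ), (∀ τ ∈ L, τ.IsSwap) ∧ L.prod = l.formPerm ∧
      L.length = l.length - 1
  | [], _ => ⟨[], by simp, by simp, by simp⟩
  | [x], _ => ⟨[], by simp, by simp, by simp⟩
  | x :: y :: t, h => by
    obtain ⟨L, hL, hLp, hLl⟩ := formPerm_swap_list (y :: t) h.of_cons
    have hxy : x ≠ y := by
      intro hc; subst hc; simp at h
    refine ⟨Equiv.swap x y :: L, ?_, ?_, ?_⟩
    · intro τ hτ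
      rcases List.mem_cons.1 hτ with rfl | hτ
      · exact ⟨x, y, hxy, rfl⟩
      · exact hL τ hτ
    · rw [List.prod_cons, hLp, List.formPerm_cons_cons]
    · simp only [List.length_cons] at *
      omega

lemma exists_swap_list_of_forall {γ : Type*} (g : γ → Equiv.Perm ℕ) (c : γ → ℕ) :
    ∀ us : List γ,
    (∀ u ∈ us, ∃ L : List (Equiv.Perm ℕ), (∀ τ ∈ L, τ.IsSwap) ∧ L.prod = g u ∧ L.length = c u) →
    ∃ L : List (Equiv.Perm ℕ), (∀ τ ∈ L, τ.IsSwap) ∧ L.prod = (us.map g).prod ∧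
      L.length = (us.map c).sum
  | [], _ => ⟨[], by simp, by simp, by simp⟩
  | u :: t, h => by
    obtain ⟨L, hL, hLp, hLl⟩ := h u (by simp)
    obtain ⟨M, hM, hMp, hMl⟩ := exists_swap_list_of_forall g c t fun v hv => h v (by simp [hv])
    refine ⟨L ++ M, ?_, ?_, ?_⟩
    · intro τ hτ
      rcases List.mem_append.1 hτ with hτ | hτ
      exacts [hL τ hτ, hM τ hτ]
    · rw [List.prod_append, hLp, hMp, List.map_cons, List.prod_cons]
    · simp [hLl, hMl]

lemma sort_map_sum {α : Type*} [LinearOrder α] (s : Finset α) (f : α → ℕ) :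
    ((s.sort (· ≤ ·) : List α).map f).sum = ∑ u ∈ s, f u := by
  have h := congrArg Multiset.sum (congrArg (Multiset.map f) (Finset.sort_eq s (· ≤ ·)))
  simp only [Multiset.map_coe, Multiset.sum_coe] at h
  rw [h, Finset.sum]

lemma list_prod_apply_eq_self {x : ℕ} : ∀ {l : List (Equiv.Perm ℕ)},
    (∀ τ ∈ l, τ x = x) → l.prod x = x
  | [], _ => by simp
  | τ :: t, h => by
    rw [List.prod_cons, Equiv.Perm.mul_apply,
      list_prod_apply_eq_self fun g hg => h g (by simp [hg]), h τ (by simp)]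

namespace PhyloTree

variable {n : ℕ} (T : PhyloTree n)

lemma mem_children {w v : Fin T.numNodes} :
    w ∈ T.children v ↔ T.parent w = v ∧ w ≠ T.root := by
  simp [children]

/-- The depth of a node: the least number of `parent`-iterations reaching the root. -/
noncomputable def dep (v : Fin T.numNodes) : ℕ := Nat.find (T.reach_root v)

lemma dep_spec (v : Fin T.numNodes) : T.parent^[T.dep v] v = T.root :=
  Nat.find_spec (T.reach_root v)

lemma dep_min {v : Fin T.numNodes} {k : ℕ} (h : k < T.dep v) :
    T.parent^[k] v ≠ T.root := Nat.find_min (T.reach_root v) h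

lemma dep_lt (v : Fin T.numNodes) : T.dep v < T.numNodes := by
  have key : ∀ i j : ℕ, i < j → j ≤ T.dep v → T.parent^[i] v ≠ T.parent^[j] v := by
    intro i j hij hjd heq
    have h1 : T.parent^[(T.dep v - j) + j] v = T.root := by
      rw [Nat.sub_add_cancel hjd]; exact T.dep_spec v
    rw [Function.iterate_add_apply, ← heq, ← Function.iterate_add_apply] at h1
    exact T.dep_min (by omega) h1
  have hinj : Function.Injective (fun i : Fin (T.dep v + 1) => T.parent^[(i : ℕ)] v) := by
    intro i j hij
    by_contra hne
    rcases Nat.lt_or_ge (i : ℕ) (j : ℕ) with h | h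
    · exact key i j h (by omega) hij
    · have h' : (j : ℕ) < (i : ℕ) := by
        rcases Nat.lt_or_ge (j : ℕ) (i : ℕ) with h' | h'
        · exact h'
        · exact absurd (Fin.ext (le_antisymm h' h)) hne
      exact key j i h' (by omega) hij.symm
  have := Fintype.card_le_of_injective _ hinj
  simpa using this

lemma dep_child {v w : Fin T.numNodes} (hw : w ∈ T.children v) : T.dep v < T.dep w := by
  obtain ⟨hp, hr⟩ := T.mem_children.1 hw
  have hd0 : T.dep w ≠ 0 := by
    intro h
    exact hr (by simpa [h] using T.dep_spec w)
  have h1 : T.parent^[T.dep w - 1] v = T.root := by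
    have : T.parent^[(T.dep w - 1) + 1] w = T.root := by
      rw [Nat.sub_add_cancel (by omega)]; exact T.dep_spec w
    rw [Function.iterate_add_apply] at this
    simpa [hp] using this
  have : T.dep v ≤ T.dep w - 1 := Nat.find_min' (T.reach_root v) h1
  omega

/-- The set of lengths of directed paths from `v` to a leaf. -/
def pathSet (v : Fin T.numNodes) : Set ℕ :=
  {k | ∃ f : Fin (k + 1) → Fin T.numNodes, f 0 = v ∧
    (∀ i : Fin k, f i.succ ∈ T.children (f i.castSucc)) ∧ T.IsLeaf (f (Fin.last k))}

lemma height_eq (v : Fin T.numNodes) : T.height v = sSup (T.pathSet v) := rfl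

lemma pathSet_lt {v : Fin T.numNodes} {k : ℕ} (hk : k ∈ T.pathSet v) : k < T.numNodes := by
  obtain ⟨f, hf0, hstep, hleaf⟩ := hk
  have hmono : StrictMono (fun i : Fin (k + 1) => T.dep (f i)) :=
    Fin.strictMono_iff_lt_succ.2 fun i => T.dep_child (hstep i)
  have hinj : Function.Injective f := fun i j hij => hmono.injective (by simp [hij])
  have := Fintype.card_le_of_injective _ hinj
  simpa using this

lemma pathSet_bdd (v : Fin T.numNodes) : BddAbove (T.pathSet v) :=
  ⟨T.numNodes, fun k hk => le_of_lt (T.pathSet_lt hk)⟩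

lemma mem_pathSet_succ {v w : Fin T.numNodes} {k : ℕ} (hw : w ∈ T.children v)
    (hk : k ∈ T.pathSet w) : k + 1 ∈ T.pathSet v := by
  obtain ⟨f, hf0, hstep, hleaf⟩ := hk
  refine ⟨Fin.cases (motive := fun _ => Fin T.numNodes) v f, by simp, ?_, ?_⟩
  · intro i
    induction i using Fin.cases with
    | zero =>
      have h1 : (0 : Fin (k + 1)).succ = Fin.succ (0 : Fin (k + 1)) := rfl
      rw [h1, Fin.cases_succ, Fin.castSucc_zero, Fin.cases_zero, hf0]
      exact hw
    | succ j =>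
      have h1 : (j.succ : Fin (k + 1)).succ = Fin.succ (j.succ) := rfl
      have h2 : (j.succ : Fin (k + 1)).castSucc = Fin.succ j.castSucc :=
        (Fin.succ_castSucc j).symm
      rw [h1, h2, Fin.cases_succ, Fin.cases_succ]
      exact hstep j
  · have : Fin.last (k + 1) = Fin.succ (Fin.last k) := (Fin.succ_last k).symm
    rw [this, Fin.cases_succ]
    exact hleaf

lemma pathSet_nonempty_aux : ∀ (m : ℕ) (v : Fin T.numNodes),
    T.numNodes - T.dep v ≤ m → (T.pathSet v).Nonempty := by
  intro m
  induction m with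
  | zero =>
    intro v h
    exact absurd (T.dep_lt v) (by omega)
  | succ m ih =>
    intro v h
    by_cases hv : T.IsLeaf v
    · exact ⟨0, ⟨fun _ => v, rfl, fun i => i.elim0, hv⟩⟩
    · obtain ⟨w, hw⟩ := Finset.nonempty_iff_ne_empty.2 hv
      have hd := T.dep_child hw
      have hlt := T.dep_lt w
      obtain ⟨k, hk⟩ := ih w (by omega)
      exact ⟨k + 1, T.mem_pathSet_succ hw hk⟩

lemma pathSet_nonempty (v : Fin T.numNodes) : (T.pathSet v).Nonempty :=
  T.pathSet_nonempty_aux T.numNodes v (by omega)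

lemma height_child_lt {v w : Fin T.numNodes} (hw : w ∈ T.children v) :
    T.height w < T.height v := by
  have hk : T.height w ∈ T.pathSet w := by
    rw [height_eq]
    exact Nat.sSup_mem (T.pathSet_nonempty w) (T.pathSet_bdd w)
  have h1 : T.height w + 1 ∈ T.pathSet v := T.mem_pathSet_succ hw hk
  have h2 : T.height w + 1 ≤ T.height v := le_csSup (T.pathSet_bdd v) h1
  omega

variable {ℓ : Fin T.numNodes → ℕ}

lemma child_label_mem (hℓ : T.IsBUO ℓ) {v w : Fin T.numNodes} (hw : w ∈ T.children v) :
    ℓ w ∈ Finset.Icc 1 (T.numNodes - 1) := by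
  have h1 : ℓ w < ℓ v := hℓ.2.2.2.1 w v (T.height_child_lt hw)
  have h2 := hℓ.2.1 v
  have h3 := hℓ.2.1 w
  rw [Set.mem_Icc] at h2 h3
  rw [Finset.mem_Icc]
  omega

lemma sum_card_children : ∑ u ∈ T.internals, (T.children u).card = T.numNodes - 1 := by
  have h1 : (Finset.univ.filter fun w : Fin T.numNodes => w ≠ T.root).card
      = T.numNodes - 1 := by
    rw [Finset.filter_ne', Finset.card_erase_of_mem (Finset.mem_univ _), Finset.card_univ,
      Fintype.card_fin]
  have h2 := Finset.card_eq_sum_card_fiberwise (f := T.parent)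
    (s := Finset.univ.filter fun w : Fin T.numNodes => w ≠ T.root) (t := Finset.univ)
    (fun x _ => Finset.mem_univ _)
  have h3 : ∀ v, ((Finset.univ.filter fun w : Fin T.numNodes => w ≠ T.root).filter
      fun w => T.parent w = v) = T.children v := by
    intro v
    ext w
    simp only [Finset.mem_filter, Finset.mem_univ, true_and, mem_children]
    tauto
  have h4 : ∑ v ∈ T.internals, (T.children v).card
      = ∑ v ∈ (Finset.univ : Finset (Fin T.numNodes)), (T.children v).card := by
    refine Finset.sum_subset (Finset.subset_univ _) ?_
    intro v _ hv
    have hleaf : T.IsLeaf v := by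
      by_contra hc
      exact hv (by simp [internals, hc])
    rw [Finset.card_eq_zero]
    exact hleaf
  rw [h4, ← h1, h2]
  exact Finset.sum_congr rfl fun v _ => by rw [h3]

lemma card_leaves : (Finset.univ.filter fun v : Fin T.numNodes => T.IsLeaf v).card = n := by
  have hb := T.label_bij
  have hset : ({v : Fin T.numNodes | T.IsLeaf v} : Set _)
      = {v | Finset.univ.filter (fun w => T.parent w = v ∧ w ≠ T.root) = ∅} := rfl
  have h1 : ({v : Fin T.numNodes | T.IsLeaf v} : Set _).ncard = (Set.Icc 1 n).ncard := by
    rw [hset, ← hb.image_eq, Set.ncard_image_of_injOn hb.injOn]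
  have h2 : (Set.Icc 1 n).ncard = n := by
    rw [← Finset.coe_Icc, Set.ncard_coe_finset, Nat.card_Icc]
    omega
  have h3 : ({v : Fin T.numNodes | T.IsLeaf v} : Set _).ncard
      = (Finset.univ.filter fun v : Fin T.numNodes => T.IsLeaf v).card := by
    rw [Set.ncard_eq_toFinset_card', Set.toFinset_setOf]
  omega

lemma card_internals_add : (Finset.univ.filter fun v : Fin T.numNodes => T.IsLeaf v).card
    + T.internals.card = T.numNodes := by
  have := Finset.card_filter_add_card_filter_not
    (s := (Finset.univ : Finset (Fin T.numNodes))) (p := fun v => T.IsLeaf v)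
  simpa [internals, Finset.card_univ] using this

lemma two_le_card_children {u : Fin T.numNodes} (hu : u ∈ T.internals) :
    2 ≤ (T.children u).card := by
  have h0 : (T.children u).card ≠ 0 := by
    rw [Ne, Finset.card_eq_zero]
    have : ¬ T.IsLeaf u := by simpa [internals] using hu
    exact this
  have h1 : (T.children u).card ≠ 1 := T.no_outdegree_one u
  omega

lemma sum_children_sub_one : ∑ u ∈ T.internals, ((T.children u).card - 1) = n - 1 ∧
    T.numNodes - 1 ≤ 2 * n - 2 ∧ 1 ≤ n := by
  have h1 := T.sum_card_children
  have h2 := T.card_leaves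
  have h3 := T.card_internals_add
  have h4 : T.internals.card • 2 ≤ ∑ u ∈ T.internals, (T.children u).card :=
    Finset.card_nsmul_le_sum _ _ _ fun u hu => T.two_le_card_children hu
  rw [smul_eq_mul] at h4
  have h5 : ∑ u ∈ T.internals, ((T.children u).card - 1) + T.internals.card
      = ∑ u ∈ T.internals, (T.children u).card := by
    have key : ∀ u ∈ T.internals, (T.children u).card - 1 + 1 = (T.children u).card :=
      fun u hu => Nat.sub_add_cancel (by have := T.two_le_card_children hu; omega)
    calc ∑ u ∈ T.internals, ((T.children u).card - 1) + T.internals.card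
        = ∑ u ∈ T.internals, (((T.children u).card - 1) + 1) := by
          rw [Finset.sum_add_distrib, Finset.sum_const, smul_eq_mul, mul_one]
      _ = ∑ u ∈ T.internals, (T.children u).card := Finset.sum_congr rfl key
  have h6 := T.numNodes_pos
  omega

lemma child_label_not_mem (hℓ : T.IsBUO ℓ) {x : ℕ}
    (hx : x ∉ Finset.Icc 1 (T.numNodes - 1)) (v : Fin T.numNodes) :
    x ∉ (T.children v).image ℓ := by
  intro hmem
  obtain ⟨w, hw, rfl⟩ := Finset.mem_image.1 hmem
  exact hx (T.child_label_mem hℓ hw)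


lemma matchPerm_movedIn (hℓ : T.IsBUO ℓ) :
    MovedIn (T.matchPerm ℓ) (Finset.Icc 1 (T.numNodes - 1)) := by
  intro x hx
  by_contra hxs
  apply hx
  apply list_prod_apply_eq_self
  intro τ hτ
  obtain ⟨u, hu, rfl⟩ := List.mem_map.1 hτ
  apply List.formPerm_apply_of_notMem
  intro hmem
  rw [Finset.mem_sort] at hmem
  exact T.child_label_not_mem hℓ hxs u hmem

lemma matchPerm_swaps (hℓ : T.IsBUO ℓ) :
    ∃ L : List (Equiv.Perm ℕ), (∀ τ ∈ L, τ.IsSwap) ∧ L.prod = T.matchPerm ℓ ∧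
      L.length = n - 1 := by
  have hall : ∀ u ∈ T.internals.sort (· ≤ ·), ∃ L : List (Equiv.Perm ℕ),
      (∀ τ ∈ L, τ.IsSwap) ∧ L.prod = kappa ((T.children u).image ℓ) ∧
      L.length = (T.children u).card - 1 := by
    intro u _
    obtain ⟨L', hL', hL'p, hL'l⟩ := formPerm_swap_list
      (((T.children u).image ℓ).sort (· ≤ ·)) (Finset.sort_nodup _ _)
    refine ⟨L', hL', hL'p, ?_⟩
    rw [hL'l, Finset.length_sort, Finset.card_image_of_injective _ hℓ.1]
  obtain ⟨L, hL, hLp, hLl⟩ := exists_swap_list_of_forall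
    (fun u => kappa ((T.children u).image ℓ)) (fun u => (T.children u).card - 1)
    (T.internals.sort (· ≤ ·)) hall
  refine ⟨L, hL, hLp, ?_⟩
  rw [hLl, sort_map_sum]
  exact (T.sum_children_sub_one).1

end PhyloTree

/-- For phylogenetic trees T₁, T₂ with n leaves labeled 1,…,n, the quantity
TD′(T₁,T₂) = d_trans(π(T₁), π(T₂)) is an even integer and TD′(T₁,T₂) ≤ 2n − 4. -/
theorem TD'_even_and_le {n : ℕ} (T₁ T₂ : PhyloTree n)
    (ℓ₁ : Fin T₁.numNodes → ℕ) (ℓ₂ : Fin T₂.numNodes → ℕ)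
    (h₁ : T₁.IsBUO ℓ₁) (h₂ : T₂.IsBUO ℓ₂) :
    Even (dTrans (T₁.matchPerm ℓ₁) (T₂.matchPerm ℓ₂)) ∧
    dTrans (T₁.matchPerm ℓ₁) (T₂.matchPerm ℓ₂) ≤ 2 * n - 4 := by
  classical
  set π₁ := T₁.matchPerm ℓ₁ with hπ₁
  set π₂ := T₂.matchPerm ℓ₂ with hπ₂
  obtain ⟨L₁, hL₁s, hL₁p, hL₁l⟩ := T₁.matchPerm_swaps h₁
  obtain ⟨L₂, hL₂s, hL₂p, hL₂l⟩ := T₂.matchPerm_swaps h₂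
  set σ := π₂⁻¹ * π₁ with hσ
  have hdt : dTrans π₁ π₂ = minSwaps σ := rfl
  set Lc := (L₂.map fun τ => τ⁻¹).reverse ++ L₁ with hLc
  have hLcs : ∀ τ ∈ Lc, τ.IsSwap := by
    intro τ hτ
    rcases List.mem_append.1 hτ with hτ | hτ
    · rw [List.mem_reverse] at hτ
      obtain ⟨g, hg, rfl⟩ := List.mem_map.1 hτ
      obtain ⟨a, b, hab, rfl⟩ := hL₂s g hg
      exact ⟨a, b, hab, by rw [Equiv.swap_inv]⟩
    · exact hL₁s τ hτ
  have hLcp : Lc.prod = σ := by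
    rw [hLc, List.prod_append, ← List.prod_inv_reverse, hL₂p, hL₁p]
  have hLcl : Lc.length = (n - 1) + (n - 1) := by
    simp [hLc, hL₁l, hL₂l]
  have hmin : minSwaps σ ∈ {k | ∃ l : List (Equiv.Perm ℕ),
      (∀ τ ∈ l, τ.IsSwap) ∧ l.prod = σ ∧ l.length = k} :=
    Nat.sInf_mem ⟨Lc.length, Lc, hLcs, hLcp, rfl⟩
  obtain ⟨l₀, hl₀s, hl₀p, hl₀l⟩ := hmin
  have hparity : Even l₀.length ↔ Even Lc.length :=
    swap_lists_length_parity hl₀s hLcs (hl₀p.trans hLcp.symm)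
  have heven : Even (minSwaps σ) := by
    rw [← hl₀l]
    exact hparity.2 (by rw [hLcl]; exact ⟨n - 1, rfl⟩)
  rw [hdt]
  refine ⟨heven, ?_⟩
  rcases eq_or_ne σ 1 with hid | hid
  · have h0 : minSwaps σ ≤ 0 :=
      Nat.sInf_le ⟨[], by simp, by simp [hid], rfl⟩
    omega
  · have hmv : MovedIn σ (Finset.Icc 1 (2 * n - 2)) := by
      intro x hx
      have hsub1 : Finset.Icc 1 (T₁.numNodes - 1) ⊆ Finset.Icc 1 (2 * n - 2) :=
        Finset.Icc_subset_Icc_right T₁.sum_children_sub_one.2.1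
      have hsub2 : Finset.Icc 1 (T₂.numNodes - 1) ⊆ Finset.Icc 1 (2 * n - 2) :=
        Finset.Icc_subset_Icc_right T₂.sum_children_sub_one.2.1
      by_cases hx1 : π₁ x = x
      · have hx2 : π₂ x ≠ x := by
          intro h
          apply hx
          rw [hσ, Equiv.Perm.mul_apply, hx1]
          exact (Equiv.Perm.inv_eq_iff_eq).2 h.symm
        exact hsub2 (T₂.matchPerm_movedIn h₂ x hx2)
      · exact hsub1 (T₁.matchPerm_movedIn h₁ x hx1)
    obtain ⟨l, hls, hlp, hll⟩ :=
      exists_swap_list_card_le (Finset.Icc 1 (2 * n - 2)).card _ σ le_rfl hmv hid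
    have hcard : (Finset.Icc 1 (2 * n - 2)).card = 2 * n - 2 := by
      rw [Nat.card_Icc]
      omega
    have hle : minSwaps σ ≤ l.length := Nat.sInf_le ⟨l, hls, hlp, rfl⟩
    obtain ⟨x, hxmv⟩ := exists_moved_of_ne_one hid
    have hxin := hmv x hxmv
    rw [Finset.mem_Icc] at hxin
    obtain ⟨k, hk⟩ := heven
    omega
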